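/- Let H be a real inner product space, g₁,…,g_K ∈ H with K ≥ 2, a := min_{i≠j} ‖gᵢ - gⱼ‖, b := max_{i≠j} |‖gᵢ‖ - ‖gⱼ‖|, π ∈ Δ_{K-1}, and L := Σ_k π_k ‖g_k‖. If L > 0, then ‖Σ_k π_k g_k‖ ≤ L - ((a² - b²)/(4L)) · Σ_k π_k(1 - π_k). -/

import Mathlib

/-!
Expanding both squares, `L² - ‖∑ πₖ gₖ‖² = ∑ᵢ ∑ⱼ πᵢ πⱼ (‖gᵢ‖ ‖gⱼ‖ - ⟪gᵢ, gⱼ⟫)`, and by the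
parallelogram-type identity `2 (‖x‖ ‖y‖ - ⟪x, y⟫) = ‖x - y‖² - (‖x‖ - ‖y‖)²` each off-diagonal
term is at least `πᵢ πⱼ (a² - b²) / 2`, while the diagonal terms vanish. Since
`∑_{i ≠ j} πᵢ πⱼ = ∑ₖ πₖ (1 - πₖ)`, this bounds `L² - ‖∑ πₖ gₖ‖²` from below, and
`L² - s² ≤ 2 L (L - s)` turns that into the claimed bound on `‖∑ πₖ gₖ‖`.
-/

open Finset RealInnerProductSpace

section InnerProductSpace

variable {H : Type*} [NormedAddCommGroup H] [InnerProductSpace ℝ H]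

lemma norm_mul_norm_sub_inner_eq (x y : H) :
    ‖x‖ * ‖y‖ - ⟪x, y⟫ = (‖x - y‖ ^ 2 - (‖x‖ - ‖y‖) ^ 2) / 2 := by
  rw [norm_sub_sq_real]
  ring

lemma sq_sub_sq_le_two_mul_norm_mul_norm_sub_inner {x y : H} {a b : ℝ} (ha : 0 ≤ a)
    (hxy : a ≤ ‖x - y‖) (hb : |‖x‖ - ‖y‖| ≤ b) :
    a ^ 2 - b ^ 2 ≤ 2 * (‖x‖ * ‖y‖ - ⟪x, y⟫) := by
  have hsub : a ^ 2 ≤ ‖x - y‖ ^ 2 := pow_le_pow_left₀ ha hxy 2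
  have habs : (‖x‖ - ‖y‖) ^ 2 ≤ b ^ 2 := by
    rw [← sq_abs]
    exact pow_le_pow_left₀ (abs_nonneg _) hb 2
  rw [norm_mul_norm_sub_inner_eq]
  linarith

variable {ι : Type*} [Fintype ι]

lemma sq_sum_mul_norm_sub_sq_norm_sum (w : ι → ℝ) (g : ι → H) :
    (∑ i, w i * ‖g i‖) ^ 2 - ‖∑ i, w i • g i‖ ^ 2
      = ∑ p : ι × ι, w p.1 * w p.2 * (‖g p.1‖ * ‖g p.2‖ - ⟪g p.1, g p.2⟫) := by
  rw [sq, sum_mul_sum, ← real_inner_self_eq_norm_sq, sum_inner, Fintype.sum_prod_type,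
    ← sum_sub_distrib]
  refine sum_congr rfl fun i _ => ?_
  rw [inner_sum, ← sum_sub_distrib]
  refine sum_congr rfl fun j _ => ?_
  rw [real_inner_smul_left, real_inner_smul_right]
  ring

variable [DecidableEq ι]

lemma sum_offDiag_mul_eq_sum_mul_one_sub {w : ι → ℝ} (hw : ∑ i, w i = 1) :
    ∑ p ∈ univ.filter (fun p : ι × ι => p.1 ≠ p.2), w p.1 * w p.2
      = ∑ i, w i * (1 - w i) := by
  have hall : ∑ p : ι × ι, w p.1 * w p.2 = 1 := by
    rw [Fintype.sum_prod_type, ← sum_mul_sum, hw, one_mul]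
  have hdiag : ∑ p ∈ univ.filter (fun p : ι × ι => ¬ p.1 ≠ p.2), w p.1 * w p.2
      = ∑ i, w i * w i := by
    rw [sum_filter, Fintype.sum_prod_type]
    simp
  have hsplit := sum_filter_add_sum_filter_not univ (fun p : ι × ι => p.1 ≠ p.2)
    (fun p => w p.1 * w p.2)
  simp only [mul_one_sub, sum_sub_distrib, hw]
  linarith

lemma sq_sub_sq_mul_sum_le_sq_sum_mul_norm_sub_sq_norm_sum {w : ι → ℝ} (hw0 : ∀ i, 0 ≤ w i)
    (hw1 : ∑ i, w i = 1) {g : ι → H} {a b : ℝ} (ha : 0 ≤ a)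
    (hdist : ∀ i j, i ≠ j → a ≤ ‖g i - g j‖) (hnorm : ∀ i j, i ≠ j → |‖g i‖ - ‖g j‖| ≤ b) :
    (a ^ 2 - b ^ 2) * ∑ i, w i * (1 - w i)
      ≤ 2 * ((∑ i, w i * ‖g i‖) ^ 2 - ‖∑ i, w i • g i‖ ^ 2) := by
  set F : ι × ι → ℝ := fun p => w p.1 * w p.2 * (‖g p.1‖ * ‖g p.2‖ - ⟪g p.1, g p.2⟫)
  have hdiag_zero : ∑ p ∈ univ.filter (fun p : ι × ι => p.1 ≠ p.2), F p = ∑ p, F p := by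
    refine sum_filter_of_ne fun p _ hFp hp => hFp ?_
    simp only [F, hp, real_inner_self_eq_norm_mul_norm, sub_self, mul_zero]
  have hpair : ∀ p ∈ univ.filter (fun p : ι × ι => p.1 ≠ p.2),
      (a ^ 2 - b ^ 2) * (w p.1 * w p.2) ≤ 2 * F p := by
    intro p hp
    have hne : p.1 ≠ p.2 := (mem_filter.mp hp).2
    have := mul_le_mul_of_nonneg_left
      (sq_sub_sq_le_two_mul_norm_mul_norm_sub_inner ha (hdist _ _ hne) (hnorm _ _ hne))
      (mul_nonneg (hw0 p.1) (hw0 p.2))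
    simp only [F]
    linarith
  rw [← sum_offDiag_mul_eq_sum_mul_one_sub hw1, mul_sum, sq_sum_mul_norm_sub_sq_norm_sum,
    ← hdiag_zero, mul_sum]
  exact sum_le_sum hpair

end InnerProductSpace

lemma le_sub_div_of_le_sq_sub_sq {L s c : ℝ} (hL : 0 < L) (h : c ≤ 2 * (L ^ 2 - s ^ 2)) :
    s ≤ L - c / (4 * L) := by
  rw [le_sub_comm, div_le_iff₀ (by positivity)]
  nlinarith [sq_nonneg (L - s)]

theorem stmt2_general {H : Type*} [NormedAddCommGroup H] [InnerProductSpace ℝ H]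
    {K : ℕ} (g : Fin K → H)
    (hne : (Finset.univ.filter fun p : Fin K × Fin K => p.1 ≠ p.2).Nonempty)
    (a b : ℝ)
    (ha : a = (Finset.univ.filter fun p : Fin K × Fin K => p.1 ≠ p.2).inf' hne
        fun p => ‖g p.1 - g p.2‖)
    (hb : b = (Finset.univ.filter fun p : Fin K × Fin K => p.1 ≠ p.2).sup' hne
        fun p => |‖g p.1‖ - ‖g p.2‖|)
    (π : Fin K → ℝ) (hπ0 : ∀ k, 0 ≤ π k) (hπ1 : ∑ k, π k = 1)
    (L : ℝ) (hL : L = ∑ k, π k * ‖g k‖) (hLpos : 0 < L) :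
    ‖∑ k, π k • g k‖ ≤ L - ((a ^ 2 - b ^ 2) / (4 * L)) * ∑ k, π k * (1 - π k) := by
  have ha0 : 0 ≤ a := ha ▸ le_inf' hne _ fun _ _ => norm_nonneg _
  have hdist : ∀ i j, i ≠ j → a ≤ ‖g i - g j‖ := fun i j hij =>
    ha ▸ inf'_le (fun p : Fin K × Fin K => ‖g p.1 - g p.2‖) (mem_filter.mpr ⟨mem_univ (i, j), hij⟩)
  have hnorm : ∀ i j, i ≠ j → |‖g i‖ - ‖g j‖| ≤ b := fun i j hij =>
    hb ▸ le_sup' (fun p : Fin K × Fin K => |‖g p.1‖ - ‖g p.2‖|)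
      (mem_filter.mpr ⟨mem_univ (i, j), hij⟩)
  have hkey := sq_sub_sq_mul_sum_le_sq_sum_mul_norm_sub_sq_norm_sum hπ0 hπ1 ha0 hdist hnorm
  rw [← hL] at hkey
  rw [div_mul_eq_mul_div]
  exact le_sub_div_of_le_sq_sub_sq hLpos hkey

theorem stmt2 {H : Type*} [NormedAddCommGroup H] [InnerProductSpace ℝ H]
    {K : ℕ} (hK : 2 ≤ K) (g : Fin K → H)
    (hne : (Finset.univ.filter fun p : Fin K × Fin K => p.1 ≠ p.2).Nonempty)
    (a b : ℝ)
    (ha : a = (Finset.univ.filter fun p : Fin K × Fin K => p.1 ≠ p.2).inf' hne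
        fun p => ‖g p.1 - g p.2‖)
    (hb : b = (Finset.univ.filter fun p : Fin K × Fin K => p.1 ≠ p.2).sup' hne
        fun p => |‖g p.1‖ - ‖g p.2‖|)
    (π : Fin K → ℝ) (hπ0 : ∀ k, 0 ≤ π k) (hπ1 : ∑ k, π k = 1)
    (L : ℝ) (hL : L = ∑ k, π k * ‖g k‖) (hLpos : 0 < L) :
    ‖∑ k, π k • g k‖ ≤ L - ((a ^ 2 - b ^ 2) / (4 * L)) * ∑ k, π k * (1 - π k) :=
  stmt2_general g hne a b ha hb π hπ0 hπ1 L hL hLpos
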